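/- On the tangent bundle TM of an n-dimensional Finsler manifold (M,F), the Lie brackets of the adapted frame fields satisfy: [∂̄/∂̄y^a, ξ] = δ̄/δ̄x^a − (ξ(E_a^j) + E_a^i G_i^j) ∂/∂y^j, [∂̄/∂̄y^a, L] = ∂̄/∂̄y^a − L(E_a^i) ∂/∂y^i, [δ̄/δ̄x^a, L] = −L(E_a^i) δ/δx^i, [δ̄/δ̄x^a, ξ] = −(E_a^i G_i^j + ξ(E_a^j)) δ/δx^j + E_a^i y^j R^k_{ij} ∂/∂y^k, and [ξ, L] = −ξ, where R^k_{ij} = δG_i^k/δx^j − δG_j^k/δx^i. -/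

import Mathlib

/-!
A local-coordinate framework for the geometry of the tangent bundle `TM` of an
`n`-dimensional Finsler manifold `(M, F)`, following the paper
"A frame on tangent bundle of a Finsler manifold and the natural foliations".

All geometric objects are described through their components on a chart domain
`U` of `TM` (avoiding the zero section): a point `p : Pt n` is the pair of
coordinates `(x^i, y^i)`, and a vector field on `TM` is given by its
components in the natural frame `(∂/∂x^i, ∂/∂y^i)`.
-/

open scoped BigOperators

noncomputable section

namespace FinslerFoliations

/-- A point of the tangent bundle `TM` in local coordinates:
`p.1 = (x^i)` is the base point and `p.2 = (y^i)` is the fibre coordinate. -/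
abbrev Pt (n : ℕ) : Type := (Fin n → ℝ) × (Fin n → ℝ)

/-- A (local) vector field on `TM`, given by its components in the natural
frame: `(X p).1 i` is the coefficient of `∂/∂x^i` and `(X p).2 i` the one of
`∂/∂y^i`. -/
abbrev VF (n : ℕ) : Type := Pt n → Pt n

variable {n : ℕ}

/-- The coordinate vector `∂/∂x^i`. -/
def ex (i : Fin n) : Pt n := (Pi.single i 1, 0)

/-- The coordinate vector `∂/∂y^i`. -/
def ey (i : Fin n) : Pt n := (0, Pi.single i 1)

/-- Partial derivative of a scalar function in the constant direction `v`. -/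
def pd (v : Pt n) (f : Pt n → ℝ) (p : Pt n) : ℝ := fderiv ℝ f p v

/-- Derivative of a scalar function along a vector field. -/
def Dv (X : VF n) (f : Pt n → ℝ) (p : Pt n) : ℝ := fderiv ℝ f p (X p)

/-- The Lie bracket of two vector fields, in coordinates. -/
def lie (X Y : VF n) : VF n := fun p => fderiv ℝ Y p (X p) - fderiv ℝ X p (Y p)

/-- Local-coordinate data of an `n`-dimensional Finsler manifold `(M, F)` on a
chart domain `U ⊆ TM` avoiding the zero section: the fundamental function `F`
(smooth, positive and positively `1`-homogeneous in `y`), the fundamental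
tensor `g_{ij} = ½ ∂²F²/∂y^i∂y^j` (symmetric and positive definite) with its
inverse `g^{ij}`, the spray coefficients
`G^i = (g^{ij}/4)(∂²F²/∂y^j∂x^k y^k − ∂F²/∂x^j)` and the nonlinear connection
coefficients `G_i^j = ∂G^j/∂y^i`. -/
structure Chart (n : ℕ) : Type where
  /-- the chart domain in `TM` -/
  U : Set (Pt n)
  hUopen : IsOpen U
  hUslit : ∀ p ∈ U, p.2 ≠ 0
  /-- the fundamental function `F` -/
  F : Pt n → ℝ
  Fpos : ∀ p ∈ U, 0 < F p
  Fsmooth : ContDiffOn ℝ (⊤ : ℕ∞) F U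
  Fhomog : ∀ p ∈ U, ∀ t : ℝ, 0 < t → (p.1, t • p.2) ∈ U →
    F (p.1, t • p.2) = t * F p
  /-- the fundamental tensor `g_{ij}` -/
  g : Fin n → Fin n → Pt n → ℝ
  gdef : ∀ i j, ∀ p ∈ U,
    g i j p = (1/2) * pd (ey i) (pd (ey j) (fun q => F q ^ 2)) p
  gsmooth : ∀ i j, ContDiffOn ℝ (⊤ : ℕ∞) (g i j) U
  gsymm : ∀ i j, ∀ p ∈ U, g i j p = g j i p
  gposdef : ∀ p ∈ U, ∀ v : Fin n → ℝ, v ≠ 0 →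
    0 < ∑ i, ∑ j, g i j p * v i * v j
  /-- the inverse `g^{ij}` of the fundamental tensor -/
  ginv : Fin n → Fin n → Pt n → ℝ
  hginv : ∀ i j, ∀ p ∈ U,
    (∑ k, g i k p * ginv k j p) = if i = j then (1:ℝ) else 0
  /-- the spray coefficients `G^i` -/
  spray : Fin n → Pt n → ℝ
  spraydef : ∀ i, ∀ p ∈ U, spray i p = (1/4) * ∑ j, ginv i j p *
      ((∑ k, pd (ey j) (pd (ex k) (fun q => F q ^ 2)) p * p.2 k)
        - pd (ex j) (fun q => F q ^ 2) p)
  /-- the nonlinear connection coefficients `G_i^j` -/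
  N : Fin n → Fin n → Pt n → ℝ
  Ndef : ∀ i j, ∀ p ∈ U, N i j p = pd (ey i) (spray j) p
  Nsmooth : ∀ i j, ContDiffOn ℝ (⊤ : ℕ∞) (N i j) U

variable (fc : Chart n)

/-- the vertical frame field `∂/∂y^i`. -/
def dyv (i : Fin n) : VF n := fun _ => ey i

/-- the horizontal frame field `δ/δx^i = ∂/∂x^i − G_i^j ∂/∂y^j`. -/
def ddx (i : Fin n) : VF n := fun p => (Pi.single i 1, fun j => -(fc.N i j p))

/-- the vertical Liouville vector field `L = y^i ∂/∂y^i`. -/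
def LV : VF n := fun p => ((0 : Fin n → ℝ), p.2)

/-- the horizontal Liouville vector field `ξ = y^i δ/δx^i`. -/
def XI : VF n := fun p => (p.2, fun j => -(∑ i, p.2 i * fc.N i j p))

/-- the dual coframe `δy^i = dy^i + G_j^i dx^j`, applied to a tangent vector. -/
def dely (i : Fin n) (p : Pt n) (v : Pt n) : ℝ := v.2 i + ∑ j, fc.N j i p * v.1 j

/-- the Sasaki lifted metric `G = g_{ij} dx^i ⊗ dx^j + g_{ij} δy^i ⊗ δy^j`. -/
def Gs (p : Pt n) (v w : Pt n) : ℝ :=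
  ∑ i, ∑ j, fc.g i j p * (v.1 i * w.1 j + dely fc i p v * dely fc j p w)

/-- the natural almost complex structure
`J = δ/δx^i ⊗ δy^i − ∂/∂y^i ⊗ dx^i`, as a pointwise endomorphism. -/
def Jm (p : Pt n) (v : Pt n) : Pt n :=
  (fun i => dely fc i p v,
   fun k => -(∑ i, dely fc i p v * fc.N i k p) - v.1 k)

/-- `J` applied to a vector field. -/
def Jvf (X : VF n) : VF n := fun p => Jm fc p (X p)

/-- the curvature coefficients `R^k_{ij} = δG_i^k/δx^j − δG_j^k/δx^i` of the
nonlinear connection. -/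
def Rc (i j k : Fin n) (p : Pt n) : ℝ :=
  Dv (ddx fc j) (fc.N i k) p - Dv (ddx fc i) (fc.N j k) p

/-- the Cartan tensor `g_{ijk} = ½ ∂g_{ij}/∂y^k`. -/
def Cartan (i j k : Fin n) (p : Pt n) : ℝ := (1/2) * pd (ey k) (fc.g i j) p

/-- the vertical adapted frame field `∂̄/∂̄y^a = E_a^i ∂/∂y^i`. -/
def vb (E : Fin (n-1) → Fin n → Pt n → ℝ) (a : Fin (n-1)) : VF n :=
  fun p => ((0 : Fin n → ℝ), fun i => E a i p)

/-- the horizontal adapted frame field `δ̄/δ̄x^a = J(∂̄/∂̄y^a)`. -/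
def hb (E : Fin (n-1) → Fin n → Pt n → ℝ) (a : Fin (n-1)) : VF n :=
  fun p => Jm fc p (vb E a p)

/-- `E` is the coefficient matrix of an adapted local frame
`∂̄/∂̄y^a = E_a^i ∂/∂y^i`, `a = 1, …, n−1`, of the distribution `V'TM` (the
`G`-orthogonal complement of the vertical Liouville field `L` inside the
vertical distribution `VTM`): the coefficients are smooth, pointwise linearly
independent, and each `∂̄/∂̄y^a` is `G`-orthogonal to `L`. -/
def IsAdaptedFrame (E : Fin (n-1) → Fin n → Pt n → ℝ) : Prop :=
  (∀ a i, ContDiffOn ℝ (⊤ : ℕ∞) (E a i) fc.U) ∧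
  (∀ p ∈ fc.U, LinearIndependent ℝ (fun a : Fin (n-1) => (fun i => E a i p))) ∧
  (∀ a, ∀ p ∈ fc.U, Gs fc p (vb E a p) (LV p) = 0)

/-- `g_{ab} = g_{ij} E_a^i E_b^j`, the components of the Sasaki metric in the
adapted frame. -/
def gb (E : Fin (n-1) → Fin n → Pt n → ℝ) (p : Pt n) (a b : Fin (n-1)) : ℝ :=
  ∑ i, ∑ j, fc.g i j p * E a i p * E b j p

/-- the matrix `(g_{ab})`. -/
def gbMat (E : Fin (n-1) → Fin n → Pt n → ℝ) (p : Pt n) :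
    Matrix (Fin (n-1)) (Fin (n-1)) ℝ :=
  Matrix.of fun a b => gb fc E p a b

/-- `(g^{ab})`, the inverse of the matrix `(g_{ab})`. -/
def gbInv (E : Fin (n-1) → Fin n → Pt n → ℝ) (p : Pt n) (a b : Fin (n-1)) : ℝ :=
  (gbMat fc E p)⁻¹ a b

/-- `g_{abc} = ½ E_a^i E_b^j E_c^k g_{ijk}`, the Cartan tensor in the adapted
frame. -/
def CartanBar (E : Fin (n-1) → Fin n → Pt n → ℝ) (a b c : Fin (n-1))
    (p : Pt n) : ℝ :=
  (1/2) * ∑ i, ∑ j, ∑ k, E a i p * E b j p * E c k p * Cartan fc i j k p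

/-- `R_{cab} = E_c^i E_a^j E_b^k R^h_{jk} g_{hi}`, the lowered curvature of the
nonlinear connection in the adapted frame. -/
def Rlow (E : Fin (n-1) → Fin n → Pt n → ℝ) (c a b : Fin (n-1)) (p : Pt n) : ℝ :=
  ∑ i, ∑ j, ∑ k, ∑ h, E c i p * E a j p * E b k p * Rc fc j k h p * fc.g h i p

/-- `nab` is the Levi-Civita connection of the Sasaki metric `G` on the chart
domain, characterized by the Koszul formula
`2G(∇_X Y, Z) = X G(Y,Z) + Y G(X,Z) − Z G(X,Y)
  − G([X,Z],Y) − G([Y,Z],X) + G([X,Y],Z)`. -/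
def IsLeviCivita (nab : VF n → VF n → VF n) : Prop :=
  ∀ X Y Z : VF n,
    ContDiffOn ℝ (⊤ : ℕ∞) X fc.U → ContDiffOn ℝ (⊤ : ℕ∞) Y fc.U →
    ContDiffOn ℝ (⊤ : ℕ∞) Z fc.U → ∀ p ∈ fc.U,
    2 * Gs fc p (nab X Y p) (Z p) =
      Dv X (fun q => Gs fc q (Y q) (Z q)) p
      + Dv Y (fun q => Gs fc q (X q) (Z q)) p
      - Dv Z (fun q => Gs fc q (X q) (Y q)) p
      - Gs fc p (lie X Z p) (Y p)
      - Gs fc p (lie Y Z p) (X p)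
      + Gs fc p (lie X Y p) (Z p)

/-- the `G`-orthogonal projection of a vector field onto the line spanned by
the vertical Liouville field `L` (the normal direction to the indicatrix). -/
def projL (X : VF n) : VF n :=
  fun p => (Gs fc p (X p) (LV p) / Gs fc p (LV p) (LV p)) • LV p

/-- the curvature tensor `R(X,Y)Z = ∇_X ∇_Y Z − ∇_Y ∇_X Z − ∇_{[X,Y]} Z` of a
connection. -/
def curv (nab : VF n → VF n → VF n) (X Y Z : VF n) : VF n :=
  fun p => nab X (nab Y Z) p - nab Y (nab X Z) p - nab (lie X Y) Z p

/-- membership in `V'TM`: vertical and `G`-orthogonal to `L`. -/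
def InV' (p v : Pt n) : Prop := v.1 = 0 ∧ Gs fc p v (LV p) = 0

/-- membership in `V^⊥TM`: `G`-orthogonal to `L`. -/
def InVperp (p v : Pt n) : Prop := Gs fc p v (LV p) = 0

/-- membership in `HTM ⊕ ⟨L⟩`, the `G`-orthogonal complement of `V'TM`. -/
def InHL (p v : Pt n) : Prop := ∃ c : ℝ, ∀ i, dely fc i p v = c * p.2 i

/-- membership in the line spanned by the vertical Liouville field `L`. -/
def InL (p v : Pt n) : Prop := ∃ c : ℝ, v = c • LV p

/-- membership in the plane spanned by `L` and `ξ`. -/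
def InLXi (p v : Pt n) : Prop := ∃ c d : ℝ, v = c • LV p + d • XI fc p

/-- membership in the `G`-orthogonal complement of `⟨L, ξ⟩`. -/
def InLXiPerp (p v : Pt n) : Prop :=
  Gs fc p v (LV p) = 0 ∧ Gs fc p v (XI fc p) = 0

/-- the contact `1`-form `η = y^i g_{ij} dx^j` of the indicatrix bundle,
applied to a tangent vector. -/
def etaC (p : Pt n) (v : Pt n) : ℝ := ∑ i, ∑ j, p.2 i * fc.g i j p * v.1 j

/-- the `(1,1)`-tensor `φ` of the contact structure of the indicatrix bundle:
`φ = J` on the contact distribution `D` and `φ(ξ) = 0`; on tangent vectors of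
`IM` it is given by `φ(v) = J v + η(v) L`. -/
def phiC (p : Pt n) (v : Pt n) : Pt n := Jm fc p v + etaC fc p v • LV p

/-- `φ` applied to a vector field. -/
def phiVF (X : VF n) : VF n := fun p => phiC fc p (X p)

/-- `η` applied to a vector field, as a scalar function. -/
def etaVF (X : VF n) : Pt n → ℝ := fun p => etaC fc p (X p)

/-- the exterior derivative `dη(X,Y) = X(η(Y)) − Y(η(X)) − η([X,Y])`. -/
def dEta (X Y : VF n) (p : Pt n) : ℝ :=
  Dv X (etaVF fc Y) p - Dv Y (etaVF fc X) p - etaC fc p (lie X Y p)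

/-- the normality tensor `N^{(1)} = [φ,φ] + 2 dη ⊗ ξ` of the contact structure
of the indicatrix bundle, evaluated on vector fields, where
`[φ,φ](X,Y) = φ²[X,Y] + [φX,φY] − φ[φX,Y] − φ[X,φY]` is the Nijenhuis torsion
of `φ`. -/
def Ntensor (X Y : VF n) : VF n := fun p =>
  phiC fc p (phiC fc p (lie X Y p)) + lie (phiVF fc X) (phiVF fc Y) p
    - phiC fc p (lie (phiVF fc X) Y p) - phiC fc p (lie X (phiVF fc Y) p)
    + (2 * dEta fc X Y p) • XI fc p

/-- a vector field of `TM` is tangent to the indicatrix bundle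
`IM = {F = 1}` (equivalently, `G`-orthogonal to the normal field `L` along
`IM`). -/
def TangentIM (X : VF n) : Prop :=
  ∀ p ∈ fc.U, fc.F p = 1 → Gs fc p (X p) (LV p) = 0

/-- The indicatrix bundle `IM`, with its natural contact metric structure
`(φ, η, ξ, Ḡ)`, is a Sasakian manifold: the contact structure is normal, i.e.
the tensor `N^{(1)} = [φ,φ] + 2 dη ⊗ ξ` vanishes on vector fields tangent to
`IM`. -/
def IsSasakianIM : Prop :=
  ∀ X Y : VF n, ContDiffOn ℝ (⊤ : ℕ∞) X fc.U → ContDiffOn ℝ (⊤ : ℕ∞) Y fc.U →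
    TangentIM fc X → TangentIM fc Y →
    ∀ p ∈ fc.U, fc.F p = 1 → Ntensor fc X Y p = 0

/-- the Nijenhuis tensor of the natural almost complex structure `J`:
`N_J(X,Y) = [JX,JY] − J[JX,Y] − J[X,JY] + J²[X,Y]`, with `J² = −Id`. -/
def NijJ (X Y : VF n) : VF n := fun p =>
  lie (Jvf fc X) (Jvf fc Y) p - Jm fc p (lie (Jvf fc X) Y p)
    - Jm fc p (lie X (Jvf fc Y) p) - lie X Y p

/-- the almost complex structure `J̄` on `TM ≅ IM × ℝ` induced by the contact
structure `(φ, η, ξ)` of the indicatrix bundle via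
`J̄(X + f L) = φ(X) − f ξ + η(X) L`, where `X` is tangent to `IM`;
a tangent vector `v` is decomposed as `v = vᵀ + f L` with
`f = G(v,L)/G(L,L)` and `vᵀ` tangent to the indicatrix. -/
def Jbar (p : Pt n) (v : Pt n) : Pt n :=
  phiC fc p (v - (Gs fc p v (LV p) / Gs fc p (LV p) (LV p)) • LV p)
    - (Gs fc p v (LV p) / Gs fc p (LV p) (LV p)) • XI fc p
    + etaC fc p (v - (Gs fc p v (LV p) / Gs fc p (LV p) (LV p)) • LV p) • LV p

/-!
The brackets are computed in coordinates, `[X, Y] = DY(X) − DX(Y)`. Besides bookkeeping, two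
facts about the nonlinear connection enter, both coming from the positive homogeneity of `F`:
`G_i^j` is homogeneous of degree one in `y`, so `L(G_i^k) = G_i^k` by Euler's theorem, and
differentiating the Euler identity `y^i G_i^k = 2 G^k` vertically gives
`y^i ∂G_i^k/∂y^m = G_m^k`. Homogeneity passes from `F²` through `g_{ij}`, `g^{ij}` and `G^i` to
`G_i^j`, because a vertical derivative lowers the degree by one and a horizontal one keeps it.
The curvature term of `[δ̄/δ̄x^a, ξ]` appears on writing `δ̄/δ̄x^a = E_a^i δ/δx^i` and
`ξ = y^j δ/δx^j`.
-/

open Filter Topology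

section FiberHomogeneous

variable {E F : Type*}

def IsFiberHomogeneousOn [SMul ℝ F] (U : Set (E × F)) (k : ℕ) (f : E × F → ℝ) : Prop :=
  ∀ p ∈ U, ∀ t : ℝ, 0 < t → (p.1, t • p.2) ∈ U → f (p.1, t • p.2) = t ^ k * f p

theorem isFiberHomogeneousOn_linear_snd [AddCommMonoid F] [Module ℝ F] (U : Set (E × F))
    (ℓ : F →ₗ[ℝ] ℝ) : IsFiberHomogeneousOn U 1 fun q => ℓ q.2 :=
  fun p _ t _ _ => by simp

namespace IsFiberHomogeneousOn

section

variable [SMul ℝ F] {U : Set (E × F)} {k l : ℕ} {f g : E × F → ℝ}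

theorem congr (hf : IsFiberHomogeneousOn U k f) (h : Set.EqOn f g U) :
    IsFiberHomogeneousOn U k g :=
  fun p hp t ht hpt => by rw [← h hp, ← h hpt]; exact hf p hp t ht hpt

theorem const_mul (hf : IsFiberHomogeneousOn U k f) (c : ℝ) :
    IsFiberHomogeneousOn U k fun q => c * f q :=
  fun p hp t ht hpt => by simp only [hf p hp t ht hpt]; ring

theorem mul (hf : IsFiberHomogeneousOn U k f) (hg : IsFiberHomogeneousOn U l g) :
    IsFiberHomogeneousOn U (k + l) fun q => f q * g q :=
  fun p hp t ht hpt => by simp only [hf p hp t ht hpt, hg p hp t ht hpt]; ring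

theorem sub (hf : IsFiberHomogeneousOn U k f) (hg : IsFiberHomogeneousOn U k g) :
    IsFiberHomogeneousOn U k fun q => f q - g q :=
  fun p hp t ht hpt => by simp only [hf p hp t ht hpt, hg p hp t ht hpt]; ring

theorem sum {ι : Type*} (s : Finset ι) {f : ι → E × F → ℝ}
    (hf : ∀ i ∈ s, IsFiberHomogeneousOn U k (f i)) :
    IsFiberHomogeneousOn U k fun q => ∑ i ∈ s, f i q :=
  fun p hp t ht hpt => by
    rw [Finset.mul_sum]; exact Finset.sum_congr rfl fun i hi => hf i hi p hp t ht hpt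

end

variable [NormedAddCommGroup E] [NormedSpace ℝ E] [NormedAddCommGroup F] [NormedSpace ℝ F]
  {U : Set (E × F)} {k : ℕ} {f : E × F → ℝ}

theorem fderiv_apply_smul_snd (hf : IsFiberHomogeneousOn U k f) (hU : IsOpen U)
    (hdf : DifferentiableOn ℝ f U) {p : E × F} (hp : p ∈ U) {t : ℝ} (ht : 0 < t)
    (hpt : (p.1, t • p.2) ∈ U) (v : E × F) :
    fderiv ℝ f (p.1, t • p.2) (v.1, t • v.2) = t ^ k * fderiv ℝ f p v := by
  set S : E × F →L[ℝ] E × F :=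
    (ContinuousLinearMap.id ℝ E).prodMap (t • ContinuousLinearMap.id ℝ F)
  have hS : ∀ q, S q = (q.1, t • q.2) := fun q => rfl
  have hscaled : (fun q => f (S q)) =ᶠ[𝓝 p] fun q => t ^ k * f q := by
    filter_upwards [(hU.inter (hU.preimage S.continuous)).mem_nhds ⟨hp, hpt⟩] with q hq
    exact hf q hq.1 t ht hq.2
  have hcomp : HasFDerivAt (fun q => f (S q)) ((fderiv ℝ f (S p)).comp S) p :=
    (hdf.differentiableAt (hU.mem_nhds hpt)).hasFDerivAt.comp p S.hasFDerivAt
  have hmul : HasFDerivAt (fun q => t ^ k * f q) (t ^ k • fderiv ℝ f p) p :=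
    (hdf.differentiableAt (hU.mem_nhds hp)).hasFDerivAt.const_mul _
  simpa [hS] using congrArg (· v) ((hcomp.congr_of_eventuallyEq hscaled.symm).unique hmul)

theorem fderiv_vertical (hf : IsFiberHomogeneousOn U (k + 1) f) (hU : IsOpen U)
    (hdf : DifferentiableOn ℝ f U) (w : F) :
    IsFiberHomogeneousOn U k fun q => fderiv ℝ f q (0, w) := fun p hp t ht hpt => by
  have h := hf.fderiv_apply_smul_snd hU hdf hp ht hpt (0, w)
  rw [show ((0 : E), t • w) = t • ((0 : E), w) by simp, map_smul, smul_eq_mul, pow_succ] at h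
  exact mul_left_cancel₀ ht.ne' (by linear_combination h)

theorem fderiv_horizontal (hf : IsFiberHomogeneousOn U k f) (hU : IsOpen U)
    (hdf : DifferentiableOn ℝ f U) (u : E) :
    IsFiberHomogeneousOn U k fun q => fderiv ℝ f q (u, 0) := fun p hp t ht hpt => by
  simpa using hf.fderiv_apply_smul_snd hU hdf hp ht hpt (u, 0)

theorem fderiv_euler (hf : IsFiberHomogeneousOn U k f) (hU : IsOpen U) {p : E × F}
    (hp : p ∈ U) (hdf : DifferentiableAt ℝ f p) :
    fderiv ℝ f p (0, p.2) = k * f p := by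
  set γ : ℝ → E × F := fun t => (p.1, t • p.2)
  have hγ1 : γ 1 = p := by simp [γ]
  have hγ : HasDerivAt γ (0, p.2) 1 :=
    (hasDerivAt_const 1 p.1).prodMk (by simpa using (hasDerivAt_id (1 : ℝ)).smul_const p.2)
  have hdf1 : HasFDerivAt f (fderiv ℝ f p) (γ 1) := hγ1 ▸ hdf.hasFDerivAt
  have hcomp : HasDerivAt (fun t => f (γ t)) (fderiv ℝ f p (0, p.2)) 1 :=
    hdf1.comp_hasDerivAt 1 hγ
  have hU1 : ∀ᶠ t in 𝓝 (1 : ℝ), γ t ∈ U :=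
    (by fun_prop : Continuous γ).continuousAt.preimage_mem_nhds (hγ1 ▸ hU.mem_nhds hp)
  have hscaled : (fun t => f (γ t)) =ᶠ[𝓝 (1 : ℝ)] fun t => t ^ k * f p := by
    filter_upwards [hU1, eventually_gt_nhds one_pos] with t htU ht
    exact hf p hp t ht htU
  exact (hcomp.congr_of_eventuallyEq hscaled.symm).unique
    (by simpa using (hasDerivAt_pow k (1 : ℝ)).mul_const (f p))

end IsFiberHomogeneousOn

end FiberHomogeneous

section MatrixSmooth

variable {X : Type*} [NormedAddCommGroup X] [NormedSpace ℝ X] {ι : Type*} [Fintype ι]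
  [DecidableEq ι] {M : X → Matrix ι ι ℝ} {p : X}

theorem contDiffAt_matrix_det {m : WithTop ℕ∞}
    (hM : ∀ i j, ContDiffAt ℝ m (fun q => M q i j) p) : ContDiffAt ℝ m (fun q => (M q).det) p := by
  simp only [Matrix.det_apply']
  exact ContDiffAt.sum fun σ _ => contDiffAt_const.mul (contDiffAt_prod fun i _ => hM (σ i) i)

theorem contDiffAt_matrix_inv_apply {m : WithTop ℕ∞}
    (hM : ∀ i j, ContDiffAt ℝ m (fun q => M q i j) p) (hdet : (M p).det ≠ 0) (i j : ι) :
    ContDiffAt ℝ m (fun q => (M q)⁻¹ i j) p := by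
  have hadj : ContDiffAt ℝ m (fun q => (M q).adjugate i j) p := by
    simp only [Matrix.adjugate_apply]
    refine contDiffAt_matrix_det fun k l => ?_
    by_cases hk : k = j
    · simp only [hk, Matrix.updateRow_self]; exact contDiffAt_const
    · simp only [Matrix.updateRow_ne hk]; exact hM k l
  simp only [Matrix.inv_def, Ring.inverse_eq_inv', Matrix.smul_apply, smul_eq_mul]
  exact ((contDiffAt_matrix_det hM).inv hdet).mul hadj

end MatrixSmooth

theorem sum_smul_ey (c : Fin n → ℝ) : ∑ i, c i • (ey i : Pt n) = (0, c) := by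
  ext j <;> simp [ey, Prod.fst_sum, Prod.snd_sum, Pi.single_apply]

namespace Chart

theorem differentiableOn_of_contDiffOn {f : Pt n → ℝ} (hf : ContDiffOn ℝ (⊤ : ℕ∞) f fc.U) :
    DifferentiableOn ℝ f fc.U :=
  hf.differentiableOn (by simp)

theorem differentiableAt_of_contDiffOn {f : Pt n → ℝ} (hf : ContDiffOn ℝ (⊤ : ℕ∞) f fc.U)
    {p : Pt n} (hp : p ∈ fc.U) : DifferentiableAt ℝ f p :=
  (fc.differentiableOn_of_contDiffOn hf).differentiableAt (fc.hUopen.mem_nhds hp)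

theorem contDiffOn_pd {f : Pt n → ℝ} (hf : ContDiffOn ℝ (⊤ : ℕ∞) f fc.U) (v : Pt n) :
    ContDiffOn ℝ (⊤ : ℕ∞) (pd v f) fc.U :=
  (hf.fderiv_of_isOpen fc.hUopen ENat.coe_top_add_one.le).clm_apply contDiffOn_const

theorem contDiffOn_F_sq : ContDiffOn ℝ (⊤ : ℕ∞) (fun q => fc.F q ^ 2) fc.U :=
  fc.Fsmooth.pow 2

theorem isFiberHomogeneousOn_F_sq : IsFiberHomogeneousOn fc.U 2 fun q => fc.F q ^ 2 :=
  fun p hp t ht hpt => by simp only [fc.Fhomog p hp t ht hpt]; ring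

theorem isFiberHomogeneousOn_pd_ex_F_sq (j : Fin n) :
    IsFiberHomogeneousOn fc.U 2 (pd (ex j) fun q => fc.F q ^ 2) :=
  fc.isFiberHomogeneousOn_F_sq.fderiv_horizontal fc.hUopen
    (fc.differentiableOn_of_contDiffOn fc.contDiffOn_F_sq) _

theorem isFiberHomogeneousOn_g (i j : Fin n) : IsFiberHomogeneousOn fc.U 0 (fc.g i j) := by
  have h1 : IsFiberHomogeneousOn fc.U 1 (pd (ey j) fun q => fc.F q ^ 2) :=
    fc.isFiberHomogeneousOn_F_sq.fderiv_vertical fc.hUopen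
      (fc.differentiableOn_of_contDiffOn fc.contDiffOn_F_sq) _
  have h0 : IsFiberHomogeneousOn fc.U 0 (pd (ey i) (pd (ey j) fun q => fc.F q ^ 2)) :=
    h1.fderiv_vertical fc.hUopen
      (fc.differentiableOn_of_contDiffOn (fc.contDiffOn_pd fc.contDiffOn_F_sq _)) _
  exact (h0.const_mul (1 / 2)).congr fun q hq => (fc.gdef i j q hq).symm

def gmat (q : Pt n) : Matrix (Fin n) (Fin n) ℝ := Matrix.of fun i j => fc.g i j q

theorem gmat_mul_ginv {p : Pt n} (hp : p ∈ fc.U) :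
    fc.gmat p * Matrix.of (fun i j => fc.ginv i j p) = 1 := by
  ext i j
  simpa [Matrix.mul_apply, gmat, Matrix.one_apply] using fc.hginv i j p hp

theorem ginv_eq_inv {p : Pt n} (hp : p ∈ fc.U) (i j : Fin n) :
    fc.ginv i j p = (fc.gmat p)⁻¹ i j := by
  rw [Matrix.inv_eq_right_inv (fc.gmat_mul_ginv hp)]; rfl

theorem isFiberHomogeneousOn_ginv (i j : Fin n) : IsFiberHomogeneousOn fc.U 0 (fc.ginv i j) :=
  fun p hp t ht hpt => by
    have hg : fc.gmat (p.1, t • p.2) = fc.gmat p := by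
      ext i j; simpa [gmat] using fc.isFiberHomogeneousOn_g i j p hp t ht hpt
    rw [fc.ginv_eq_inv hpt, fc.ginv_eq_inv hp, hg, pow_zero, one_mul]

theorem contDiffOn_ginv (i j : Fin n) : ContDiffOn ℝ (⊤ : ℕ∞) (fc.ginv i j) fc.U := by
  intro p hp
  have hdet : (fc.gmat p).det ≠ 0 :=
    (Matrix.isUnit_det_of_right_inverse (fc.gmat_mul_ginv hp)).ne_zero
  have hinv : ContDiffAt ℝ (⊤ : ℕ∞) (fun q => (fc.gmat q)⁻¹ i j) p :=
    contDiffAt_matrix_inv_apply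
      (fun k l => (fc.gsmooth k l).contDiffAt (fc.hUopen.mem_nhds hp)) hdet i j
  exact hinv.contDiffWithinAt.congr (fun q hq => fc.ginv_eq_inv hq i j) (fc.ginv_eq_inv hp i j)

theorem isFiberHomogeneousOn_spray (k : Fin n) : IsFiberHomogeneousOn fc.U 2 (fc.spray k) := by
  have hyx : ∀ j m, IsFiberHomogeneousOn fc.U 1 (pd (ey j) (pd (ex m) fun q => fc.F q ^ 2)) :=
    fun j m => (fc.isFiberHomogeneousOn_pd_ex_F_sq m).fderiv_vertical fc.hUopen
      (fc.differentiableOn_of_contDiffOn (fc.contDiffOn_pd fc.contDiffOn_F_sq _)) _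
  have h := ((IsFiberHomogeneousOn.sum Finset.univ fun j _ =>
    (fc.isFiberHomogeneousOn_ginv k j).mul
      ((IsFiberHomogeneousOn.sum Finset.univ fun m _ =>
        (hyx j m).mul (isFiberHomogeneousOn_linear_snd fc.U (LinearMap.proj m))).sub
        (fc.isFiberHomogeneousOn_pd_ex_F_sq j))).const_mul (1 / 4))
  exact h.congr fun q hq => (fc.spraydef k q hq).symm

theorem contDiffOn_spray (k : Fin n) : ContDiffOn ℝ (⊤ : ℕ∞) (fc.spray k) fc.U := by
  have hF := fc.contDiffOn_F_sq
  refine (contDiffOn_const.mul (ContDiffOn.sum fun j _ => (fc.contDiffOn_ginv k j).mul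
    ((ContDiffOn.sum fun m _ => (fc.contDiffOn_pd (fc.contDiffOn_pd hF _) _).mul ?_).sub
      (fc.contDiffOn_pd hF _)))).congr fun q hq => fc.spraydef k q hq
  exact (contDiff_apply ℝ ℝ m).comp contDiff_snd |>.contDiffOn

theorem isFiberHomogeneousOn_N (i k : Fin n) : IsFiberHomogeneousOn fc.U 1 (fc.N i k) :=
  ((fc.isFiberHomogeneousOn_spray k).fderiv_vertical fc.hUopen
    (fc.differentiableOn_of_contDiffOn (fc.contDiffOn_spray k)) _).congr
    fun q hq => (fc.Ndef i k q hq).symm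

variable {p : Pt n}

theorem fderiv_N_liouville (hp : p ∈ fc.U) (i k : Fin n) :
    fderiv ℝ (fc.N i k) p (0, p.2) = fc.N i k p := by
  simpa using (fc.isFiberHomogeneousOn_N i k).fderiv_euler fc.hUopen hp
    (fc.differentiableAt_of_contDiffOn (fc.Nsmooth i k) hp)

theorem fderiv_spray_vertical (hp : p ∈ fc.U) (k : Fin n) (w : Fin n → ℝ) :
    fderiv ℝ (fc.spray k) p (0, w) = ∑ i, w i * fc.N i k p := by
  simp only [← sum_smul_ey w, map_sum, map_smul, smul_eq_mul]
  exact Finset.sum_congr rfl fun i _ => by rw [fc.Ndef i k p hp]; rfl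

theorem sum_mul_N_eq_two_mul_spray (hp : p ∈ fc.U) (k : Fin n) :
    ∑ i, p.2 i * fc.N i k p = 2 * fc.spray k p := by
  rw [← fc.fderiv_spray_vertical hp, (fc.isFiberHomogeneousOn_spray k).fderiv_euler fc.hUopen hp
    (fc.differentiableAt_of_contDiffOn (fc.contDiffOn_spray k) hp)]
  norm_num

/-- The vertical derivative of `y^i G_i^k = 2 G^k`. -/
theorem sum_mul_fderiv_N_vertical (hp : p ∈ fc.U) (k : Fin n) (w : Fin n → ℝ) :
    ∑ i, p.2 i * fderiv ℝ (fc.N i k) p (0, w) = ∑ i, w i * fc.N i k p := by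
  have hN : ∀ i, DifferentiableAt ℝ (fc.N i k) p :=
    fun i => fc.differentiableAt_of_contDiffOn (fc.Nsmooth i k) hp
  have hlhs : HasFDerivAt (fun q : Pt n => ∑ i, q.2 i * fc.N i k q)
      (∑ i, (p.2 i • fderiv ℝ (fc.N i k) p + fc.N i k p •
        (ContinuousLinearMap.proj i).comp (ContinuousLinearMap.snd ℝ _ _))) p :=
    HasFDerivAt.fun_sum fun i _ =>
      ((ContinuousLinearMap.proj i).comp (ContinuousLinearMap.snd ℝ _ _)).hasFDerivAt.mul
        (hN i).hasFDerivAt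
  have hrhs :
      HasFDerivAt (fun q : Pt n => 2 * fc.spray k q) ((2 : ℝ) • fderiv ℝ (fc.spray k) p) p :=
    (fc.differentiableAt_of_contDiffOn (fc.contDiffOn_spray k) hp).hasFDerivAt.const_mul 2
  have heq : (fun q : Pt n => ∑ i, q.2 i * fc.N i k q) =ᶠ[𝓝 p] fun q => 2 * fc.spray k q := by
    filter_upwards [fc.hUopen.mem_nhds hp] with q hq using fc.sum_mul_N_eq_two_mul_spray hq k
  have h := congrArg (· (0, w)) ((hlhs.congr_of_eventuallyEq heq.symm).unique hrhs)
  simp only [Finset.sum_add_distrib, add_apply, sum_apply, smul_apply, smul_eq_mul,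
    ContinuousLinearMap.comp_apply, ContinuousLinearMap.coe_snd', ContinuousLinearMap.proj_apply,
    mul_comm (fc.N _ k p),
    fc.fderiv_spray_vertical hp] at h
  linear_combination h

end Chart

theorem sum_smul_ddx (p : Pt n) (c : Fin n → ℝ) :
    ∑ i, c i • ddx fc i p = (c, fun k => -∑ i, c i * fc.N i k p) := by
  ext j <;> simp [ddx, Prod.fst_sum, Prod.snd_sum, Pi.single_apply]

theorem XI_eq_sum_smul_ddx (p : Pt n) : XI fc p = ∑ i, p.2 i • ddx fc i p :=
  (sum_smul_ddx fc p _).symm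

variable {E : Fin (n-1) → Fin n → Pt n → ℝ} {a : Fin (n-1)}

theorem hb_eq_sum_smul_ddx (p : Pt n) : hb fc E a p = ∑ i, E a i p • ddx fc i p := by
  rw [sum_smul_ddx]; simp [hb, Jm, vb, dely]

variable {p : Pt n}

theorem fderiv_LV_apply (v : Pt n) : fderiv ℝ LV p v = (0, v.2) := by
  have h : HasFDerivAt (LV (n := n))
      ((0 : Pt n →L[ℝ] (Fin n → ℝ)).prod (ContinuousLinearMap.snd ℝ _ _)) p :=
    (hasFDerivAt_const _ _).prodMk hasFDerivAt_snd
  simp [h.fderiv]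

theorem fderiv_vb_apply (hE : ∀ i, DifferentiableAt ℝ (E a i) p) (v : Pt n) :
    fderiv ℝ (vb E a) p v = (0, fun i => fderiv ℝ (E a i) p v) := by
  have h : HasFDerivAt (vb E a) ((0 : Pt n →L[ℝ] (Fin n → ℝ)).prod
      (ContinuousLinearMap.pi fun i => fderiv ℝ (E a i) p)) p :=
    (hasFDerivAt_const _ _).prodMk (hasFDerivAt_pi.2 fun i => (hE i).hasFDerivAt)
  simp [h.fderiv]

theorem fderiv_XI_apply (hp : p ∈ fc.U) (v : Pt n) :
    fderiv ℝ (XI fc) p v =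
      (v.2, fun k => -∑ i, (v.2 i * fc.N i k p + p.2 i * fderiv ℝ (fc.N i k) p v)) := by
  have hy : ∀ i, HasFDerivAt (fun q : Pt n => q.2 i)
      ((ContinuousLinearMap.proj i).comp (ContinuousLinearMap.snd ℝ _ _)) p := fun i =>
    ((ContinuousLinearMap.proj i).comp
      (ContinuousLinearMap.snd ℝ (Fin n → ℝ) (Fin n → ℝ))).hasFDerivAt
  have h : HasFDerivAt (XI fc) ((ContinuousLinearMap.snd ℝ _ _).prod
      (ContinuousLinearMap.pi fun k => -∑ i, (p.2 i • fderiv ℝ (fc.N i k) p +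
        fc.N i k p • (ContinuousLinearMap.proj i).comp (ContinuousLinearMap.snd ℝ _ _)))) p :=
    hasFDerivAt_snd.prodMk (hasFDerivAt_pi.2 fun k => (HasFDerivAt.fun_sum fun i _ =>
      (hy i).mul (fc.differentiableAt_of_contDiffOn (fc.Nsmooth i k) hp).hasFDerivAt).neg)
  ext k
  · simp [h.fderiv]
  · simp [h.fderiv, add_comm, mul_comm]

theorem fderiv_hb_apply (hp : p ∈ fc.U) (hE : ∀ i, DifferentiableAt ℝ (E a i) p) (v : Pt n) :
    fderiv ℝ (hb fc E a) p v = (fun i => fderiv ℝ (E a i) p v,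
      fun k => -∑ i, (fderiv ℝ (E a i) p v * fc.N i k p
        + E a i p * fderiv ℝ (fc.N i k) p v)) := by
  have hhb : hb fc E a =
      fun q => ((fun i => E a i q, fun k => -∑ i, E a i q * fc.N i k q) : Pt n) := by
    funext q; rw [hb_eq_sum_smul_ddx, sum_smul_ddx]
  have h : HasFDerivAt (hb fc E a) ((ContinuousLinearMap.pi fun i => fderiv ℝ (E a i) p).prod
      (ContinuousLinearMap.pi fun k => -∑ i, (E a i p • fderiv ℝ (fc.N i k) p +
        fc.N i k p • fderiv ℝ (E a i) p))) p := by
    rw [hhb]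
    exact (hasFDerivAt_pi.2 fun i => (hE i).hasFDerivAt).prodMk (hasFDerivAt_pi.2 fun k =>
      (HasFDerivAt.fun_sum fun i _ =>
        (hE i).hasFDerivAt.mul
          (fc.differentiableAt_of_contDiffOn (fc.Nsmooth i k) hp).hasFDerivAt).neg)
  ext k
  · simp [h.fderiv]
  · simp [h.fderiv, add_comm, mul_comm]

theorem sum_sum_mul_Rc (p : Pt n) (k : Fin n) (u w : Fin n → ℝ) :
    ∑ i, ∑ j, u i * w j * Rc fc i j k p =
      ∑ i, u i * fderiv ℝ (fc.N i k) p (∑ j, w j • ddx fc j p)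
        - ∑ j, w j * fderiv ℝ (fc.N j k) p (∑ i, u i • ddx fc i p) := by
  simp only [Rc, Dv, map_sum, map_smul, smul_eq_mul, Finset.mul_sum, mul_sub,
    Finset.sum_sub_distrib]
  rw [Finset.sum_comm (f := fun j i => w j * (u i * _))]
  congr 1 <;> exact Finset.sum_congr rfl fun i _ => Finset.sum_congr rfl fun j _ => by ring

theorem lie_vb_XI (hp : p ∈ fc.U) (hE : ∀ i, DifferentiableAt ℝ (E a i) p) :
    lie (vb E a) (XI fc) p = hb fc E a p -
      ∑ j, (Dv (XI fc) (E a j) p + ∑ i, E a i p * fc.N i j p) • (ey j : Pt n) := by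
  rw [lie, fderiv_XI_apply fc hp, fderiv_vb_apply hE, hb_eq_sum_smul_ddx, sum_smul_ddx,
    sum_smul_ey]
  ext k
  · simp [vb]
  · have h := fc.sum_mul_fderiv_N_vertical hp k (fun i => E a i p)
    simp only [vb, Dv]
    simp only [Finset.sum_add_distrib, Prod.mk_sub_mk, sub_zero, Pi.sub_apply, h]
    ring

theorem lie_vb_LV (hE : ∀ i, DifferentiableAt ℝ (E a i) p) :
    lie (vb E a) LV p = vb E a p - ∑ i, Dv LV (E a i) p • (ey i : Pt n) := by
  rw [lie, fderiv_LV_apply, fderiv_vb_apply hE, sum_smul_ey]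
  ext k <;> simp [vb, Dv]

theorem lie_hb_LV (hp : p ∈ fc.U) (hE : ∀ i, DifferentiableAt ℝ (E a i) p) :
    lie (hb fc E a) LV p = -(∑ i, Dv LV (E a i) p • ddx fc i p) := by
  rw [lie, fderiv_LV_apply, fderiv_hb_apply fc hp hE, hb_eq_sum_smul_ddx, sum_smul_ddx,
    sum_smul_ddx]
  ext k
  · simp [Dv]
  · simp [Dv, LV, fc.fderiv_N_liouville hp, Finset.sum_add_distrib]

theorem lie_hb_XI (hp : p ∈ fc.U) (hE : ∀ i, DifferentiableAt ℝ (E a i) p) :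
    lie (hb fc E a) (XI fc) p =
      -(∑ j, ((∑ i, E a i p * fc.N i j p) + Dv (XI fc) (E a j) p) • ddx fc j p)
        + ∑ k, (∑ i, ∑ j, E a i p * p.2 j * Rc fc i j k p) • (ey k : Pt n) := by
  have hR : ∀ k, ∑ i, ∑ j, E a i p * p.2 j * Rc fc i j k p =
      ∑ i, E a i p * fderiv ℝ (fc.N i k) p (XI fc p)
        - ∑ j, p.2 j * fderiv ℝ (fc.N j k) p (hb fc E a p) := fun k => by
    rw [sum_sum_mul_Rc, XI_eq_sum_smul_ddx, hb_eq_sum_smul_ddx]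
  simp only [hR]
  rw [lie, fderiv_XI_apply fc hp, fderiv_hb_apply fc hp hE, sum_smul_ddx, sum_smul_ey]
  ext k
  · simp only [hb_eq_sum_smul_ddx, sum_smul_ddx, Prod.mk_sub_mk, Pi.sub_apply, Dv, Prod.neg_mk,
      Prod.mk_add_mk, add_zero, Pi.neg_apply]
    ring
  · simp only [hb_eq_sum_smul_ddx, sum_smul_ddx, Prod.mk_sub_mk, Pi.sub_apply, Dv, Prod.neg_mk,
      Prod.mk_add_mk, Pi.add_apply, Pi.neg_apply, neg_mul, add_mul, Finset.sum_add_distrib,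
      Finset.sum_neg_distrib]
    ring

theorem lie_XI_LV (hp : p ∈ fc.U) : lie (XI fc) LV p = -(XI fc p) := by
  rw [lie, fderiv_LV_apply, fderiv_XI_apply fc hp]
  ext k
  · simp [XI, LV]
  · simp [XI, LV, fc.fderiv_N_liouville hp, Finset.sum_add_distrib]

/-- Lie brackets of the adapted frame fields:
`[∂̄/∂̄y^a, ξ] = δ̄/δ̄x^a − (ξ(E_a^j) + E_a^i G_i^j) ∂/∂y^j`,
`[∂̄/∂̄y^a, L] = ∂̄/∂̄y^a − L(E_a^i) ∂/∂y^i`,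
`[δ̄/δ̄x^a, L] = −L(E_a^i) δ/δx^i`,
`[δ̄/δ̄x^a, ξ] = −(E_a^i G_i^j + ξ(E_a^j)) δ/δx^j + E_a^i y^j R^k_{ij} ∂/∂y^k`,
and `[ξ, L] = −ξ`, where `R^k_{ij} = δG_i^k/δx^j − δG_j^k/δx^i`. -/
theorem adapted_frame_lie_brackets {n : ℕ} (fc : Chart n)
    (E : Fin (n-1) → Fin n → Pt n → ℝ) (hE : IsAdaptedFrame fc E) :
    ∀ p ∈ fc.U, ∀ a : Fin (n-1),
      (lie (vb E a) (XI fc) p =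
        hb fc E a p -
          ∑ j, (Dv (XI fc) (E a j) p + ∑ i, E a i p * fc.N i j p) • (ey j : Pt n)) ∧
      (lie (vb E a) LV p = vb E a p - ∑ i, Dv LV (E a i) p • (ey i : Pt n)) ∧
      (lie (hb fc E a) LV p = -(∑ i, Dv LV (E a i) p • ddx fc i p)) ∧
      (lie (hb fc E a) (XI fc) p =
        -(∑ j, ((∑ i, E a i p * fc.N i j p) + Dv (XI fc) (E a j) p) • ddx fc j p)
          + ∑ k, (∑ i, ∑ j, E a i p * p.2 j * Rc fc i j k p) • (ey k : Pt n)) ∧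
      (lie (XI fc) LV p = -(XI fc p)) := by
  intro p hp a
  have hEp : ∀ i, DifferentiableAt ℝ (E a i) p :=
    fun i => fc.differentiableAt_of_contDiffOn (hE.1 a i) hp
  exact ⟨lie_vb_XI fc hp hEp, lie_vb_LV hEp, lie_hb_LV fc hp hEp, lie_hb_XI fc hp hEp,
    lie_XI_LV fc hp⟩

end FinslerFoliations

end
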